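/- arXiv:math/0506324 — 5 statements merged into one kernel-verified Lean document; each statement's English description precedes it below -/
import Mathlib

section
/- Let R be a commutative ring and A an R-module admitting two finite presentations, i.e. exact sequences R^m → R^n → A → 0 with n×m presentation matrix M, and R^{m'} → R^{n'} → A → 0 with n'×m' presentation matrix M'. Then for every i ≥ 0, the ideal of R generated by the (n−i)×(n−i) minors of M coincides with the ideal generated by the (n'−i)×(n'−i) minors of M' (with the conventions that this ideal is all of R when the minor size is ≤ 0, and is the zero ideal when the minor size exceeds the number of columns). In other words, the i-th elementary (Fitting) ideal E_i(A) is independent of the choice of finite presentation of A. -/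
open Matrix LinearMap

/-- The ideal of `R` generated by the `k × k` minors of the matrix `M`.
(If `k = 0` this is all of `R`; if `k` exceeds the number of columns it is `0`.) -/
def minorsIdeal {R : Type*} [CommRing R] {n m : ℕ} (M : Matrix (Fin n) (Fin m) R)
    (k : ℕ) : Ideal R :=
  Ideal.span { x | ∃ (r : Fin k → Fin n) (c : Fin k → Fin m), x = (M.submatrix r c).det }

/-- The `i`-th elementary (Fitting) ideal of a module presented by the `n × m` matrix `M`:
the ideal generated by the `(n - i) × (n - i)` minors of `M`. -/
def elemIdeal {R : Type*} [CommRing R] {n m : ℕ} (M : Matrix (Fin n) (Fin m) R)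
    (i : ℕ) : Ideal R :=
  minorsIdeal M (n - i)

/-!
Minor ideals `I_k` of a matrix only depend on its column space, because the minors of `N * C` are
`R`-linear combinations of minors of `N` (multilinearity of the determinant in the rows), and they
shift under stabilization: `I_k [[N, B], [0, 1_s]] = I_(k-s) N`. Writing the generators of one
presentation in terms of those of the other gives matrices `P`, `P'` such that `[[M, -P], [0, 1]]`
and, up to the order of the rows, `[[M', -P'], [0, 1]]` are relation matrices of `A` for the joint
generating set; so `I_(n-i) M = I_(n+n'-i)` of either big matrix `= I_(n'-i) M'`.
-/

theorem LinearMap.exists_matrix_comp_mulVecLin_eq {R A : Type*} [CommRing R] [AddCommGroup A]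
    [Module R A] {ι ι' : Type*} [Fintype ι'] (f : (ι → R) →ₗ[R] A) (g : (ι' → R) →ₗ[R] A)
    (h : range g ≤ range f) : ∃ P : Matrix ι ι' R, f ∘ₗ P.mulVecLin = g := by
  classical
  choose p hp using fun j : ι' => h ⟨Pi.single j 1, rfl⟩
  refine ⟨(Matrix.of p)ᵀ, pi_ext' fun j => ext_ring ?_⟩
  simp [hp]

namespace Matrix

variable {R : Type*} [CommRing R] {ι κ : Type*}

def minorIdeal (M : Matrix ι κ R) (k : ℕ) : Ideal R :=
  Ideal.span {x | ∃ (r : Fin k → ι) (c : Fin k → κ), x = (M.submatrix r c).det}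

theorem det_submatrix_mem_minorIdeal (M : Matrix ι κ R) {k : ℕ} (r : Fin k → ι)
    (c : Fin k → κ) : (M.submatrix r c).det ∈ M.minorIdeal k :=
  Ideal.subset_span ⟨r, c, rfl⟩

theorem minorIdeal_le_iff {M : Matrix ι κ R} {k : ℕ} {I : Ideal R} :
    M.minorIdeal k ≤ I ↔ ∀ (r : Fin k → ι) (c : Fin k → κ), (M.submatrix r c).det ∈ I := by
  simp only [minorIdeal, Ideal.span_le, Set.subset_def, Set.mem_ofPred_eq, forall_exists_index]
  exact ⟨fun h r c => h _ r c rfl, fun h x r c hx => hx ▸ h r c⟩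

theorem minorIdeal_zero (M : Matrix ι κ R) : M.minorIdeal 0 = ⊤ :=
  (Ideal.eq_top_iff_one _).2 <| by
    simpa using M.det_submatrix_mem_minorIdeal (Fin.elim0 : Fin 0 → ι) Fin.elim0

theorem minorIdeal_succ_le (M : Matrix ι κ R) (k : ℕ) :
    M.minorIdeal (k + 1) ≤ M.minorIdeal k := minorIdeal_le_iff.2 fun r c => by
  rw [det_succ_row _ 0]
  exact Ideal.sum_mem _ fun j _ => Ideal.mul_mem_left _ _ <| by
    rw [submatrix_submatrix]; exact M.det_submatrix_mem_minorIdeal _ _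

theorem minorIdeal_antitone (M : Matrix ι κ R) : Antitone M.minorIdeal :=
  antitone_nat_of_succ_le M.minorIdeal_succ_le

theorem minorIdeal_submatrix_le {ι' κ' : Type*} (M : Matrix ι κ R) (f : ι' → ι) (g : κ' → κ)
    (k : ℕ) : (M.submatrix f g).minorIdeal k ≤ M.minorIdeal k :=
  minorIdeal_le_iff.2 fun r c => by
    rw [submatrix_submatrix]; exact M.det_submatrix_mem_minorIdeal _ _

theorem minorIdeal_submatrix_equiv {ι' κ' : Type*} (M : Matrix ι κ R) (e : ι' ≃ ι) (f : κ' ≃ κ)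
    (k : ℕ) : (M.submatrix e f).minorIdeal k = M.minorIdeal k :=
  (M.minorIdeal_submatrix_le e f k).antisymm <| by
    simpa using (M.submatrix e f).minorIdeal_submatrix_le e.symm f.symm k

theorem minorIdeal_transpose_le (M : Matrix ι κ R) (k : ℕ) :
    Mᵀ.minorIdeal k ≤ M.minorIdeal k := minorIdeal_le_iff.2 fun r c => by
  rw [← transpose_submatrix, det_transpose]; exact M.det_submatrix_mem_minorIdeal _ _

theorem minorIdeal_transpose (M : Matrix ι κ R) (k : ℕ) : Mᵀ.minorIdeal k = M.minorIdeal k :=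
  (M.minorIdeal_transpose_le k).antisymm (by simpa using Mᵀ.minorIdeal_transpose_le k)

theorem det_submatrix_mul {κ' : Type*} [Fintype κ] (M : Matrix ι κ R) (N : Matrix κ κ' R)
    {k : ℕ} (r : Fin k → ι) (c : Fin k → κ') :
    ((M * N).submatrix r c).det =
      ∑ p : Fin k → κ, (∏ i, M (r i) (p i)) * (N.submatrix p c).det := by
  have rows : (M * N).submatrix r c = fun i => ∑ x, M (r i) x • fun j => N x (c j) := by
    ext i j; simp [mul_apply, Finset.sum_apply]
  rw [rows]
  change detRowAlternating.toMultilinearMap _ = _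
  rw [MultilinearMap.map_sum]
  refine Finset.sum_congr rfl fun p _ => ?_
  rw [MultilinearMap.map_smul_univ]
  rfl

theorem minorIdeal_mul_le_right {κ' : Type*} [Fintype κ] (M : Matrix ι κ R) (N : Matrix κ κ' R)
    (k : ℕ) : (M * N).minorIdeal k ≤ N.minorIdeal k := minorIdeal_le_iff.2 fun r c => by
  rw [det_submatrix_mul]
  exact Ideal.sum_mem _ fun p _ => Ideal.mul_mem_left _ _ (N.det_submatrix_mem_minorIdeal p c)

theorem minorIdeal_mul_le_left {κ' : Type*} [Fintype κ] (M : Matrix ι κ R) (N : Matrix κ κ' R)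
    (k : ℕ) : (M * N).minorIdeal k ≤ M.minorIdeal k := by
  rw [← minorIdeal_transpose, transpose_mul, ← M.minorIdeal_transpose]
  exact minorIdeal_mul_le_right _ _ k

theorem minorIdeal_le_of_range_le {κ' : Type*} [Fintype κ] [Fintype κ'] (M : Matrix ι κ R)
    (N : Matrix ι κ' R) (h : range M.mulVecLin ≤ range N.mulVecLin) (k : ℕ) :
    M.minorIdeal k ≤ N.minorIdeal k := by
  classical
  obtain ⟨C, hC⟩ := N.mulVecLin.exists_matrix_comp_mulVecLin_eq M.mulVecLin h
  rw [← mulVecLin_mul, ← toLin'_apply', ← toLin'_apply'] at hC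
  exact toLin'.injective hC ▸ minorIdeal_mul_le_left N C k

theorem minorIdeal_eq_of_range_eq {κ' : Type*} [Fintype κ] [Fintype κ'] (M : Matrix ι κ R)
    (N : Matrix ι κ' R) (h : range M.mulVecLin = range N.mulVecLin) (k : ℕ) :
    M.minorIdeal k = N.minorIdeal k :=
  (minorIdeal_le_of_range_le M N h.le k).antisymm (minorIdeal_le_of_range_le N M h.ge k)

theorem minorIdeal_fromBlocks_zero_le {σ : Type*} [Fintype ι] [Fintype κ] (N : Matrix ι κ R)
    (k : ℕ) : (fromBlocks N 0 0 (0 : Matrix σ σ R)).minorIdeal k ≤ N.minorIdeal k := by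
  classical
  have : fromBlocks N 0 0 (0 : Matrix σ σ R) =
      fromRows (1 : Matrix ι ι R) (0 : Matrix σ ι R) * N * fromCols 1 (0 : Matrix κ σ R) := by
    ext (i | i) (j | j) <;> simp [fromRows_mul, mul_fromCols]
  rw [this]
  exact (minorIdeal_mul_le_left _ _ k).trans (minorIdeal_mul_le_right _ _ k)

section Stabilization

variable {σ : Type*} [DecidableEq σ]

theorem fromBlocks_diagonal_submatrix_congr {α β : Type*} (N : Matrix ι κ R) {T T' : Finset σ}
    (r : α → ι ⊕ σ) (c : β → κ ⊕ σ) (h : ∀ x s, r x = .inr s → (s ∈ T ↔ s ∈ T')) :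
    (fromBlocks N 0 0 (diagonal fun s => if s ∈ T then 1 else 0)).submatrix r c =
      (fromBlocks N 0 0 (diagonal fun s => if s ∈ T' then 1 else 0)).submatrix r c := by
  ext x y
  rcases hx : r x with i | s <;> rcases hy : c y with j | t
  · simp [hx, hy]
  · simp [hx, hy]
  · simp [hx, hy]
  · simp [hx, hy, diagonal, h x s hx]

/- Expanding a minor along a row `inr s` with `s ∈ T` leaves a minor that (by injectivity of the
row selection) avoids that row, hence is also a minor of the matrix with `s` removed from `T`. -/
theorem minorIdeal_fromBlocks_diagonal_le [Fintype ι] [Fintype κ] (N : Matrix ι κ R)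
    (T : Finset σ) (k : ℕ) :
    (fromBlocks N 0 0 (diagonal fun s => if s ∈ T then 1 else 0)).minorIdeal k ≤
      N.minorIdeal (k - T.card) := by
  induction k generalizing T with
  | zero => simp [minorIdeal_zero]
  | succ k ih =>
    refine minorIdeal_le_iff.2 fun r c => ?_
    by_cases hr : Function.Injective r
    swap
    · obtain ⟨a, b, hab, hne⟩ : ∃ a b, r a = r b ∧ a ≠ b := by
        simpa [Function.Injective] using hr
      rw [det_zero_of_row_eq hne (funext fun j => by simp [hab])]
      exact zero_mem _
    by_cases hT : ∃ a s, s ∈ T ∧ r a = .inr s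
    · obtain ⟨a, s, hs, ha⟩ := hT
      have hcard : k - (T.erase s).card = k + 1 - T.card := by
        have := Finset.card_pos.2 ⟨s, hs⟩
        rw [Finset.card_erase_of_mem hs]; omega
      rw [det_succ_row _ a]
      refine Ideal.sum_mem _ fun j _ => Ideal.mul_mem_left _ _ ?_
      rw [submatrix_submatrix, fromBlocks_diagonal_submatrix_congr N (T' := T.erase s), ← hcard]
      · exact ih _ (det_submatrix_mem_minorIdeal _ _ _)
      · intro x t hx
        have : t ≠ s := by
          rintro rfl
          exact Fin.succAbove_ne a x (hr (hx.trans ha.symm))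
        simp [this]
    · simp only [not_exists, not_and] at hT
      rw [fromBlocks_diagonal_submatrix_congr N (T' := ∅) r c fun x s hx => by
        simpa using fun hs => hT x s hs hx]
      refine N.minorIdeal_antitone (Nat.sub_le _ _) (minorIdeal_fromBlocks_zero_le (σ := σ) N _ ?_)
      simpa using det_submatrix_mem_minorIdeal _ r c

variable [Fintype σ]

theorem det_submatrix_mem_minorIdeal_fromBlocks_one (N : Matrix ι κ R) {j : ℕ} (r : Fin j → ι)
    (c : Fin j → κ) : (N.submatrix r c).det ∈
      (fromBlocks N 0 0 (1 : Matrix σ σ R)).minorIdeal (j + Fintype.card σ) := by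
  set e := (Fintype.equivFin σ).symm
  have hblock : (fromBlocks N 0 0 (1 : Matrix σ σ R)).submatrix (Sum.map r e) (Sum.map c e) =
      fromBlocks (N.submatrix r c) 0 0 1 := by
    ext (x | x) (y | y) <;> simp [one_apply]
  have := (fromBlocks N 0 0 (1 : Matrix σ σ R)).det_submatrix_mem_minorIdeal
    (Sum.map r e ∘ finSumFinEquiv.symm) (Sum.map c e ∘ finSumFinEquiv.symm)
  rwa [← submatrix_submatrix, det_submatrix_equiv_self, hblock, det_fromBlocks_zero₂₁, det_one,
    mul_one] at this

theorem minorIdeal_le_fromBlocks_one (N : Matrix ι κ R) (k : ℕ) :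
    N.minorIdeal (k - Fintype.card σ) ≤ (fromBlocks N 0 0 (1 : Matrix σ σ R)).minorIdeal k :=
  minorIdeal_le_iff.2 fun r c => (minorIdeal_antitone _ (by omega))
    (det_submatrix_mem_minorIdeal_fromBlocks_one N r c)

variable [Fintype ι] [Fintype κ]

theorem minorIdeal_fromBlocks_one (N : Matrix ι κ R) (k : ℕ) :
    (fromBlocks N 0 0 (1 : Matrix σ σ R)).minorIdeal k = N.minorIdeal (k - Fintype.card σ) :=
  le_antisymm (by simpa [← diagonal_one] using N.minorIdeal_fromBlocks_diagonal_le .univ k)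
    (minorIdeal_le_fromBlocks_one N k)

theorem minorIdeal_fromBlocks_zero_one (N : Matrix ι κ R) (B : Matrix ι σ R) (k : ℕ) :
    (fromBlocks N B 0 (1 : Matrix σ σ R)).minorIdeal k = N.minorIdeal (k - Fintype.card σ) := by
  classical
  have hadd := fromBlocks_multiply (1 : Matrix ι ι R) B (0 : Matrix σ ι R) 1 N 0 0
    (1 : Matrix σ σ R)
  have hsub := fromBlocks_multiply (1 : Matrix ι ι R) (-B) (0 : Matrix σ ι R) 1 N B 0
    (1 : Matrix σ σ R)
  simp only [Matrix.one_mul, Matrix.mul_one, Matrix.mul_zero, Matrix.zero_mul, add_zero, zero_add,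
    add_neg_cancel] at hadd hsub
  rw [← minorIdeal_fromBlocks_one N k]
  refine le_antisymm ?_ ?_
  · rw [← hadd]; exact minorIdeal_mul_le_right _ _ k
  · rw [← hsub]; exact minorIdeal_mul_le_right _ _ k

end Stabilization

end Matrix

theorem elemIdeal_eq_minorIdeal {R : Type*} [CommRing R] {n m : ℕ} (M : Matrix (Fin n) (Fin m) R)
    (i : ℕ) : elemIdeal M i = M.minorIdeal (n - i) :=
  rfl

theorem Matrix.range_mulVecLin_submatrix_equiv {R ι ι' κ : Type*} [CommRing R] [Fintype κ]
    (M : Matrix ι κ R) (e : ι' ≃ ι) :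
    range (M.submatrix e _root_.id).mulVecLin = (range M.mulVecLin).comap (funLeft R R e.symm) := by
  ext x
  simp only [mem_range, Submodule.mem_comap, mulVecLin_apply]
  constructor
  · rintro ⟨v, rfl⟩
    exact ⟨v, funext fun i => by simp [mulVec, dotProduct]⟩
  · rintro ⟨v, hv⟩
    exact ⟨v, funext fun i => by simpa [mulVec, dotProduct] using congrFun hv (e i)⟩

theorem LinearMap.ker_comp_funLeft_add_eq_range_fromBlocks {R A : Type*} [CommRing R]
    [AddCommGroup A] [Module R A] {ι ι' κ : Type*} [Fintype ι'] [Fintype κ] [DecidableEq ι']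
    {g : (ι → R) →ₗ[R] A} {g' : (ι' → R) →ₗ[R] A} {M : Matrix ι κ R} {P : Matrix ι ι' R}
    (hker : ker g = range M.mulVecLin) (hP : g ∘ₗ P.mulVecLin = g') :
    ker (g ∘ₗ funLeft R R Sum.inl + g' ∘ₗ funLeft R R Sum.inr) =
      range (fromBlocks M (-P) 0 1).mulVecLin := by
  ext x
  have hx : (g ∘ₗ funLeft R R Sum.inl + g' ∘ₗ funLeft R R Sum.inr : (ι ⊕ ι' → R) →ₗ[R] A) x =
      g (x ∘ Sum.inl + P *ᵥ (x ∘ Sum.inr)) := by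
    rw [← hP]; exact (map_add g _ _).symm
  rw [mem_ker, hx, ← mem_ker, hker]
  constructor
  · rintro ⟨v, hv⟩
    rw [mulVecLin_apply] at hv
    refine ⟨Sum.elim v (x ∘ Sum.inr), funext fun i => ?_⟩
    rcases i with i | i
    · simp [fromBlocks_mulVec, hv, neg_mulVec]
    · simp [fromBlocks_mulVec]
  · rintro ⟨w, rfl⟩
    exact ⟨w ∘ Sum.inl, by simp [fromBlocks_mulVec, neg_mulVec]⟩

/-- The `i`-th elementary (Fitting) ideal of a finitely presented module `A` is independent
of the choice of finite presentation: if `R^m → R^n → A → 0` and `R^{m'} → R^{n'} → A → 0`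
are exact with presentation matrices `M`, `M'`, then for every `i ≥ 0` the ideal generated
by the `(n-i) × (n-i)` minors of `M` equals the ideal generated by the `(n'-i) × (n'-i)`
minors of `M'`. -/
theorem fitting_ideal_independent_of_presentation
    {R : Type*} [CommRing R] {A : Type*} [AddCommGroup A] [Module R A]
    {n m n' m' : ℕ} (M : Matrix (Fin n) (Fin m) R) (M' : Matrix (Fin n') (Fin m') R)
    (g : (Fin n → R) →ₗ[R] A) (g' : (Fin n' → R) →ₗ[R] A)
    (hg : Function.Surjective g)
    (hker : LinearMap.ker g = LinearMap.range M.mulVecLin)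
    (hg' : Function.Surjective g')
    (hker' : LinearMap.ker g' = LinearMap.range M'.mulVecLin)
    (i : ℕ) :
    elemIdeal M i = elemIdeal M' i := by
  obtain ⟨P, hP⟩ := g.exists_matrix_comp_mulVecLin_eq g' (range_eq_top.2 hg ▸ le_top)
  obtain ⟨P', hP'⟩ := g'.exists_matrix_comp_mulVecLin_eq g (range_eq_top.2 hg' ▸ le_top)
  have hswap : g ∘ₗ funLeft R R Sum.inl + g' ∘ₗ funLeft R R Sum.inr =
      (g' ∘ₗ funLeft R R Sum.inl + g ∘ₗ funLeft R R Sum.inr) ∘ₗ funLeft R R Sum.swap :=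
    LinearMap.ext fun _ => add_comm _ _
  have hrange : range (fromBlocks M (-P) 0 1).mulVecLin =
      range ((fromBlocks M' (-P') 0 1).submatrix (Equiv.sumComm _ _) _root_.id).mulVecLin := by
    rw [← ker_comp_funLeft_add_eq_range_fromBlocks hker hP, hswap, ker_comp,
      ker_comp_funLeft_add_eq_range_fromBlocks hker' hP', range_mulVecLin_submatrix_equiv]
    rfl
  calc elemIdeal M i = (fromBlocks M (-P) 0 1).minorIdeal (n + n' - i) := by
        rw [minorIdeal_fromBlocks_zero_one, Fintype.card_fin, elemIdeal_eq_minorIdeal]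
        congr 1; omega
    _ = ((fromBlocks M' (-P') 0 1).submatrix (Equiv.sumComm _ _) _root_.id).minorIdeal
          (n + n' - i) := minorIdeal_eq_of_range_eq _ _ hrange _
    _ = elemIdeal M' i := by
        refine (minorIdeal_submatrix_equiv _ _ (Equiv.refl _) _).trans ?_
        rw [minorIdeal_fromBlocks_zero_one, Fintype.card_fin, elemIdeal_eq_minorIdeal]
        congr 1; omega
end

section
/- Let R be a commutative Noetherian ring which is a unique factorization domain, and let A and B be finitely generated R-modules. Then Δ_0(A ⊕ B) is associated (equal up to multiplication by a unit of R) to the product Δ_0(A) · Δ_0(B). -/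
/-!
Let `E(K)` be the ideal generated by the determinants of the square matrices whose rows lie in the
relation module `K ⊆ R^ι` of a presentation `R^ι → A`; for `K` the column space of a presentation
matrix, `E(K)` is the ideal of its maximal minors, i.e. `E_0(A)`. It does not depend on the
presentation: comparing two presentations with the combined one, adjoining generators only shears
`R^(ι ⊕ κ)` and adds free coordinates. For the block presentation of `A × B` the relations are
`K_A × K_B`; splitting every row into its two components by multilinearity and permuting rows makes
each resulting matrix block triangular, whence `E_0(A × B) = E_0(A) E_0(B)`. Finally, in a GCD
domain the gcd of a product of two finitely generated ideals is the product of their gcds.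
-/

open Matrix LinearMap

/-- `d` is a greatest common divisor of the elements of the ideal `I`. -/
def IsGCDOfIdeal {R : Type*} [CommRing R] (d : R) (I : Ideal R) : Prop :=
  (∀ x ∈ I, d ∣ x) ∧ ∀ e : R, (∀ x ∈ I, e ∣ x) → e ∣ d

theorem Finset.exists_perm_forall_mem_of_card_le {α : Type*} [Fintype α] [DecidableEq α]
    {s t : Finset α} (h : s.card ≤ t.card) : ∃ σ : Equiv.Perm α, ∀ x ∈ s, σ x ∈ t := by
  obtain ⟨t', ht', hcard⟩ := Finset.exists_subset_card_eq h
  let e : {x // x ∈ s} ≃ {x // x ∈ t'} := Fintype.equivOfCardEq (by simp [hcard])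
  exact ⟨e.extendSubtype, fun x hx => ht' (e.extendSubtype_mem x hx)⟩

theorem Finset.exists_perm_forall_mem_or_forall_notMem {α : Type*} [Fintype α] [DecidableEq α]
    (s t : Finset α) : ∃ τ : Equiv.Perm α, (∀ x ∈ t, τ x ∈ s) ∨ ∀ x ∉ t, τ x ∉ s := by
  rcases le_total t.card s.card with h | h
  · obtain ⟨τ, hτ⟩ := exists_perm_forall_mem_of_card_le h
    exact ⟨τ, .inl hτ⟩
  · obtain ⟨σ, hσ⟩ := exists_perm_forall_mem_of_card_le h
    exact ⟨σ.symm, .inr fun x hx hs => hx (by simpa using hσ _ hs)⟩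

section DetIdeal

variable {R : Type*} [CommRing R] {η η' ι κ : Type*}
  [Fintype η] [DecidableEq η] [Fintype η'] [DecidableEq η']
  [Fintype ι] [DecidableEq ι] [Fintype κ] [DecidableEq κ]
  {K₁ : Submodule R (ι → R)} {K₂ : Submodule R (κ → R)}

/-- For the relations `K` of a presentation with generators indexed by `η`, this is the zeroth
elementary ideal `E_0`. -/
def detIdeal (K : Submodule R (η → R)) : Ideal R :=
  Ideal.span {d | ∃ v : η → η → R, (∀ i, v i ∈ K) ∧ (Matrix.of v).det = d}

theorem det_mem_detIdeal {K : Submodule R (η → R)} {v : η → η → R} (hv : ∀ i, v i ∈ K) :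
    (Matrix.of v).det ∈ detIdeal K :=
  Ideal.subset_span ⟨v, hv, rfl⟩

theorem detIdeal_le {K : Submodule R (η → R)} {I : Ideal R}
    (h : ∀ v : η → η → R, (∀ i, v i ∈ K) → (Matrix.of v).det ∈ I) : detIdeal K ≤ I :=
  Ideal.span_le.mpr fun _ ⟨v, hv, hd⟩ => hd ▸ h v hv

theorem detIdeal_top : detIdeal (⊤ : Submodule R (η → R)) = ⊤ :=
  (Ideal.eq_top_iff_one _).mpr <| by
    convert det_mem_detIdeal (K := ⊤) (v := (1 : Matrix η η R)) fun _ => trivial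
    exact Matrix.det_one.symm

theorem detIdeal_map_le (e : η ≃ η') (f : (η → R) →ₗ[R] η' → R) (K : Submodule R (η → R)) :
    detIdeal (K.map f) ≤ detIdeal K := by
  refine detIdeal_le fun w hw => ?_
  choose v hvK hvw using hw
  have hmul : (Matrix.of w).submatrix e e =
      Matrix.of (fun i => v (e i)) * ((LinearMap.toMatrix' f).submatrix e _root_.id)ᵀ := by
    ext i j
    rw [Matrix.mul_apply, Matrix.submatrix_apply, Matrix.of_apply, ← hvw,
      ← LinearMap.toMatrix'_mulVec f]
    simp [Matrix.mulVec, dotProduct, mul_comm]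
  rw [← Matrix.det_submatrix_equiv_self e, hmul, Matrix.det_mul]
  exact Ideal.mul_mem_right _ _ (det_mem_detIdeal fun i => hvK _)

theorem detIdeal_comap_linearEquiv (e : η ≃ η') (φ : (η → R) ≃ₗ[R] η' → R)
    (K : Submodule R (η' → R)) : detIdeal (K.comap φ.toLinearMap) = detIdeal K := by
  rw [Submodule.comap_equiv_eq_map_symm]
  refine le_antisymm (detIdeal_map_le e.symm _ K) ?_
  have hK : (K.map φ.symm.toLinearMap).map φ.toLinearMap = K :=
    (Submodule.map_symm_eq_iff φ).mp rfl
  calc detIdeal K = detIdeal ((K.map φ.symm.toLinearMap).map φ.toLinearMap) := by rw [hK]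
    _ ≤ _ := detIdeal_map_le e _ _

theorem det_mem_mul_detIdeal_of_blockTriangular (N : Matrix (ι ⊕ κ) (ι ⊕ κ) R)
    (hN : N.toBlocks₁₂ = 0 ∨ N.toBlocks₂₁ = 0)
    (h₁ : ∀ p, (fun i => N p (.inl i)) ∈ K₁) (h₂ : ∀ p, (fun j => N p (.inr j)) ∈ K₂) :
    N.det ∈ detIdeal K₁ * detIdeal K₂ := by
  have hdet : N.det = N.toBlocks₁₁.det * N.toBlocks₂₂.det := by
    conv_lhs => rw [← N.fromBlocks_toBlocks]
    rcases hN with h | h <;> rw [h]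
    · exact Matrix.det_fromBlocks_zero₁₂ _ _ _
    · exact Matrix.det_fromBlocks_zero₂₁ _ _ _
  rw [hdet]
  exact Ideal.mul_mem_mul (det_mem_detIdeal fun i => h₁ _) (det_mem_detIdeal fun j => h₂ _)

theorem det_mem_mul_detIdeal_of_rows_supported (N : Matrix (ι ⊕ κ) (ι ⊕ κ) R)
    (s : Finset (ι ⊕ κ)) (hs : ∀ p ∈ s, ∀ j, N p (.inr j) = 0)
    (hsc : ∀ p ∉ s, ∀ i, N p (.inl i) = 0)
    (h₁ : ∀ p, (fun i => N p (.inl i)) ∈ K₁) (h₂ : ∀ p, (fun j => N p (.inr j)) ∈ K₂) :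
    N.det ∈ detIdeal K₁ * detIdeal K₂ := by
  -- Permuting the rows makes `N` block triangular.
  obtain ⟨τ, hτ⟩ := s.exists_perm_forall_mem_or_forall_notMem {x | x.isLeft}
  have hperm : (N.submatrix τ _root_.id).det ∈ detIdeal K₁ * detIdeal K₂ := by
    refine det_mem_mul_detIdeal_of_blockTriangular _ ?_ (fun p => h₁ _) (fun p => h₂ _)
    rcases hτ with hτ | hτ
    · exact .inl <| Matrix.ext fun i j => hs _ (hτ _ (by simp)) j
    · exact .inr <| Matrix.ext fun j i => hsc _ (hτ _ (by simp)) i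
  have hsign : ((Equiv.Perm.sign τ : ℤ) : R) * (Equiv.Perm.sign τ : ℤ) = 1 := by
    rw [← Int.cast_mul, ← Units.val_mul, Int.units_mul_self, Units.val_one, Int.cast_one]
  rw [Matrix.det_permute] at hperm
  simpa [← mul_assoc, hsign] using Ideal.mul_mem_left _ ((Equiv.Perm.sign τ : ℤ) : R) hperm

theorem detIdeal_comap_inl_inf_comap_inr :
    detIdeal (K₁.comap (funLeft R R Sum.inl) ⊓ K₂.comap (funLeft R R Sum.inr)) =
      detIdeal K₁ * detIdeal K₂ := by
  apply le_antisymm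
  · refine detIdeal_le fun w hw => ?_
    let a : ι ⊕ κ → ι ⊕ κ → R := fun p => Sum.elim (fun i => w p (.inl i)) 0
    let b : ι ⊕ κ → ι ⊕ κ → R := fun p => Sum.elim 0 (fun j => w p (.inr j))
    have hab : w = a + b := by ext p (i | j) <;> simp [a, b]
    change Matrix.detRowAlternating w ∈ _
    rw [hab, AlternatingMap.map_add_univ]
    refine Ideal.sum_mem _ fun s _ => det_mem_mul_detIdeal_of_rows_supported _ s ?_ ?_ ?_ ?_
    · intro p hp j
      simp [a, hp]
    · intro p hp i
      simp [b, hp]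
    · intro p
      by_cases hp : p ∈ s
      · simp only [a, hp, Finset.piecewise_eq_of_mem, Sum.elim_inl]
        exact (hw p).1
      · simp only [b, hp, not_false_eq_true, Finset.piecewise_eq_of_notMem, Sum.elim_inl]
        exact K₁.zero_mem
    · intro p
      by_cases hp : p ∈ s
      · simp only [a, hp, Finset.piecewise_eq_of_mem, Sum.elim_inr]
        exact K₂.zero_mem
      · simp only [b, hp, not_false_eq_true, Finset.piecewise_eq_of_notMem, Sum.elim_inr]
        exact (hw p).2
  · rw [detIdeal, detIdeal, Ideal.span_mul_span', Ideal.span_le]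
    rintro _ ⟨_, ⟨v₁, hv₁, rfl⟩, _, ⟨v₂, hv₂, rfl⟩, rfl⟩
    change (Matrix.of v₁).det * (Matrix.of v₂).det ∈ _
    rw [← Matrix.det_fromBlocks_zero₁₂ (Matrix.of v₁) 0 (Matrix.of v₂)]
    refine det_mem_detIdeal (v := Matrix.fromBlocks (Matrix.of v₁) 0 0 (Matrix.of v₂))
      fun p => ?_
    rcases p with i | j
    · exact ⟨hv₁ i, K₂.zero_mem⟩
    · exact ⟨K₁.zero_mem, hv₂ j⟩

end DetIdeal

section Presentation

variable {R : Type*} [CommRing R] {ι κ : Type*} [Fintype ι] [DecidableEq ι] [Fintype κ]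
  [DecidableEq κ] {A : Type*} [AddCommGroup A] [Module R A]

theorem detIdeal_comap_inr (K : Submodule R (κ → R)) :
    detIdeal (K.comap (funLeft R R (Sum.inr : κ → ι ⊕ κ))) = detIdeal K := by
  simpa [detIdeal_top] using
    detIdeal_comap_inl_inf_comap_inr (K₁ := (⊤ : Submodule R (ι → R))) (K₂ := K)

/-- A lift `L` of `g'` through `g` gives a shear of `R^(ι ⊕ κ)` carrying the relations of the
combined presentation onto `R^ι × ker g`. -/
theorem detIdeal_ker_add_of_surjective {g : (κ → R) →ₗ[R] A} (hg : Function.Surjective g)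
    (g' : (ι → R) →ₗ[R] A) :
    detIdeal (ker (g' ∘ₗ funLeft R R Sum.inl + g ∘ₗ funLeft R R Sum.inr)) = detIdeal (ker g) := by
  obtain ⟨L, hL⟩ := Module.projective_lifting_property g g' hg
  let e := LinearEquiv.sumArrowLequivProdArrow ι κ R R
  let ψ := (e ≪≫ₗ (LinearEquiv.refl R _).skewProd (LinearEquiv.refl R _) L) ≪≫ₗ e.symm
  have hker : ker (g' ∘ₗ funLeft R R Sum.inl + g ∘ₗ funLeft R R Sum.inr) =
      ((ker g).comap (funLeft R R Sum.inr)).comap ψ.toLinearMap := by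
    ext x
    simp only [mem_ker, Submodule.mem_comap, LinearMap.add_apply, LinearMap.comp_apply, ← hL]
    rw [← map_add, add_comm]
    rfl
  rw [hker, detIdeal_comap_linearEquiv (Equiv.refl _), detIdeal_comap_inr]

theorem detIdeal_ker_eq_of_surjective {g : (ι → R) →ₗ[R] A} {g' : (κ → R) →ₗ[R] A}
    (hg : Function.Surjective g) (hg' : Function.Surjective g') :
    detIdeal (ker g) = detIdeal (ker g') := by
  rw [← detIdeal_ker_add_of_surjective hg g', ← detIdeal_ker_add_of_surjective hg' g]
  have hswap : ker (g' ∘ₗ funLeft R R Sum.inl + g ∘ₗ funLeft R R Sum.inr) =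
      (ker (g ∘ₗ funLeft R R Sum.inl + g' ∘ₗ funLeft R R Sum.inr)).comap
        (LinearEquiv.funCongrLeft R R (Equiv.sumComm ι κ)).toLinearMap := by
    ext x
    simp only [mem_ker, Submodule.mem_comap, LinearMap.add_apply, LinearMap.comp_apply]
    rw [add_comm]
    rfl
  rw [hswap, detIdeal_comap_linearEquiv (Equiv.sumComm κ ι)]

end Presentation

theorem detIdeal_range_mulVecLin {R : Type*} [CommRing R] {n m : ℕ}
    (M : Matrix (Fin n) (Fin m) R) : detIdeal (range M.mulVecLin) = minorsIdeal M n := by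
  apply le_antisymm
  · refine detIdeal_le fun v hv => ?_
    choose w hw using hv
    have hvw : v = fun i => ∑ k, w i k • Mᵀ k := by
      funext i
      rw [← hw i]
      ext j
      simp [Matrix.mulVec, dotProduct, mul_comm]
    change (Matrix.detRowAlternating : (Fin n → R) [⋀^Fin n]→ₗ[R] R).toMultilinearMap v ∈ _
    rw [hvw, MultilinearMap.map_sum]
    refine Ideal.sum_mem _ fun r _ => ?_
    rw [MultilinearMap.map_smul_univ, smul_eq_mul]
    refine Ideal.mul_mem_left _ _ (Ideal.subset_span ⟨_root_.id, r, ?_⟩)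
    rw [← Matrix.det_transpose]
    rfl
  · refine Ideal.span_le.mpr ?_
    rintro _ ⟨r, c, rfl⟩
    have hfac : M.submatrix r c =
        (1 : Matrix (Fin n) (Fin n) R).submatrix r (Equiv.refl _) * M.submatrix _root_.id c := by
      rw [Matrix.one_submatrix_mul]
      rfl
    rw [hfac, Matrix.det_mul, ← Matrix.det_transpose (M.submatrix _root_.id c)]
    exact Ideal.mul_mem_left _ _ <| det_mem_detIdeal fun i => ⟨Pi.single (c i) 1, by
      ext j
      simp⟩

theorem elemIdeal_zero_eq_detIdeal_ker {R : Type*} [CommRing R] {A : Type*} [AddCommGroup A]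
    [Module R A] {n m : ℕ} {M : Matrix (Fin n) (Fin m) R} {g : (Fin n → R) →ₗ[R] A}
    (hker : ker g = range M.mulVecLin) : elemIdeal M 0 = detIdeal (ker g) := by
  rw [hker, detIdeal_range_mulVecLin]
  rfl

section GCD

variable {R : Type*} [CommRing R] [NormalizedGCDMonoid R]

theorem IsGCDOfIdeal.dvd_mul_of_forall_dvd_mul {d : R} {J : Ideal R} (hd : IsGCDOfIdeal d J)
    (hJ : J.FG) {a e : R} (h : ∀ b ∈ J, e ∣ a * b) : e ∣ a * d := by
  obtain ⟨t, rfl⟩ := hJ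
  have hgcd : t.gcd _root_.id ∣ d := hd.2 _ fun x hx => by
    refine Ideal.mem_span_singleton.mp (Ideal.span_le.mpr (fun b hb => ?_) hx)
    exact Ideal.mem_span_singleton.mpr (Finset.gcd_dvd hb)
  calc e ∣ t.gcd (fun b => a * _root_.id b) :=
        Finset.dvd_gcd fun b hb => h b (Ideal.subset_span hb)
    _ ∣ a * t.gcd _root_.id := (Finset.gcd_mul_left' t _root_.id a).dvd
    _ ∣ a * d := mul_dvd_mul_left a hgcd

theorem IsGCDOfIdeal.associated_mul [IsDomain R] {I J : Ideal R} {dI dJ d : R}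
    (hI : IsGCDOfIdeal dI I) (hJ : IsGCDOfIdeal dJ J) (h : IsGCDOfIdeal d (I * J))
    (hIfg : I.FG) (hJfg : J.FG) :
    Associated d (dI * dJ) := by
  refine associated_of_dvd_dvd ?_ (h.2 _ fun x hx => ?_)
  · refine hJ.dvd_mul_of_forall_dvd_mul hJfg fun b hb => mul_comm b dI ▸ ?_
    exact hI.dvd_mul_of_forall_dvd_mul hIfg fun a ha =>
      mul_comm a b ▸ h.1 _ (Ideal.mul_mem_mul ha hb)
  · have hle : I * J ≤ Ideal.span {dI * dJ} := by
      rw [← Ideal.span_singleton_mul_span_singleton]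
      exact Ideal.mul_mono (fun y hy => Ideal.mem_span_singleton.mpr (hI.1 y hy))
        (fun y hy => Ideal.mem_span_singleton.mpr (hJ.1 y hy))
    exact Ideal.mem_span_singleton.mp (hle hx)

end GCD

theorem charPoly_zero_prod_general
    {R : Type*} [CommRing R] [IsDomain R] [IsNoetherianRing R] [UniqueFactorizationMonoid R]
    {A B : Type*} [AddCommGroup A] [Module R A]
    [AddCommGroup B] [Module R B]
    {na ma nb mb nc mc : ℕ}
    (MA : Matrix (Fin na) (Fin ma) R) (gA : (Fin na → R) →ₗ[R] A)
    (hgA : Function.Surjective gA)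
    (hkerA : LinearMap.ker gA = LinearMap.range MA.mulVecLin)
    (MB : Matrix (Fin nb) (Fin mb) R) (gB : (Fin nb → R) →ₗ[R] B)
    (hgB : Function.Surjective gB)
    (hkerB : LinearMap.ker gB = LinearMap.range MB.mulVecLin)
    (MC : Matrix (Fin nc) (Fin mc) R) (gC : (Fin nc → R) →ₗ[R] (A × B))
    (hgC : Function.Surjective gC)
    (hkerC : LinearMap.ker gC = LinearMap.range MC.mulVecLin)
    (dA dB dC : R)
    (hdA : IsGCDOfIdeal dA (elemIdeal MA 0))
    (hdB : IsGCDOfIdeal dB (elemIdeal MB 0))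
    (hdC : IsGCDOfIdeal dC (elemIdeal MC 0)) :
    Associated dC (dA * dB) := by
  let g := (gA ∘ₗ funLeft R R Sum.inl).prod (gB ∘ₗ funLeft R R Sum.inr)
  have hg : Function.Surjective g := by
    rintro ⟨a, b⟩
    obtain ⟨x, rfl⟩ := hgA a
    obtain ⟨y, rfl⟩ := hgB b
    exact ⟨Sum.elim x y, rfl⟩
  have hprod : elemIdeal MC 0 = elemIdeal MA 0 * elemIdeal MB 0 := by
    rw [elemIdeal_zero_eq_detIdeal_ker hkerC, elemIdeal_zero_eq_detIdeal_ker hkerA,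
      elemIdeal_zero_eq_detIdeal_ker hkerB, detIdeal_ker_eq_of_surjective hgC hg, ker_prod,
      ker_comp, ker_comp, detIdeal_comap_inl_inf_comap_inr]
  let _ := UniqueFactorizationMonoid.strongNormalizationMonoid (α := R)
  let _ := UniqueFactorizationMonoid.toNormalizedGCDMonoid R
  exact hdA.associated_mul hdB (hprod ▸ hdC) (IsNoetherian.noetherian _)
    (IsNoetherian.noetherian _)

/-- Over a Noetherian UFD `R`, for finitely generated modules `A`, `B`, one has
`Δ_0(A ⊕ B) = Δ_0(A) · Δ_0(B)` up to multiplication by a unit of `R`. -/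
theorem charPoly_zero_prod
    {R : Type*} [CommRing R] [IsDomain R] [IsNoetherianRing R] [UniqueFactorizationMonoid R]
    {A B : Type*} [AddCommGroup A] [Module R A] [Module.Finite R A]
    [AddCommGroup B] [Module R B] [Module.Finite R B]
    {na ma nb mb nc mc : ℕ}
    (MA : Matrix (Fin na) (Fin ma) R) (gA : (Fin na → R) →ₗ[R] A)
    (hgA : Function.Surjective gA)
    (hkerA : LinearMap.ker gA = LinearMap.range MA.mulVecLin)
    (MB : Matrix (Fin nb) (Fin mb) R) (gB : (Fin nb → R) →ₗ[R] B)
    (hgB : Function.Surjective gB)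
    (hkerB : LinearMap.ker gB = LinearMap.range MB.mulVecLin)
    (MC : Matrix (Fin nc) (Fin mc) R) (gC : (Fin nc → R) →ₗ[R] (A × B))
    (hgC : Function.Surjective gC)
    (hkerC : LinearMap.ker gC = LinearMap.range MC.mulVecLin)
    (dA dB dC : R)
    (hdA : IsGCDOfIdeal dA (elemIdeal MA 0))
    (hdB : IsGCDOfIdeal dB (elemIdeal MB 0))
    (hdC : IsGCDOfIdeal dC (elemIdeal MC 0)) :
    Associated dC (dA * dB) :=
  charPoly_zero_prod_general MA gA hgA hkerA MB gB hgB hkerB MC gC hgC hkerC dA dB dC hdA hdB hdC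
end

section
/- Let R be a commutative Noetherian ring which is a unique factorization domain, and let 0 → A → B → C → 0 be a short exact sequence of finitely generated R-modules. Then for every i ≥ 0, the characteristic polynomial Δ_i(B) divides the product Δ_i(A) · Δ_0(C) in R. -/
open Matrix LinearMap

/-!
The horseshoe construction presents `B` by the block matrix `[[M_C, 0], [X, M_A]]`, where `X`
lifts the relations of `C` to `B`. For a block triangular matrix, the product of a maximal minor
of `M_C` and an `(n_A - i)`-minor of `M_A` is a minor of the whole matrix, so
`E_i(A) E_0(C) ⊆ E_i(B)` as soon as elementary ideals are known not to depend on the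
presentation. The latter holds because adjoining redundant generators to a presentation does not
change its elementary ideals, and any two presentations have a common such enlargement.
Finally, in a GCD domain a common divisor of all products `x y` with `x ∈ I`, `y ∈ J` divides
`gcd I * gcd J` when `I` and `J` are finitely generated.
-/

theorem LinearMap.exists_mulVecLin_comp_eq_of_range_le {R B ι κ : Type*} [CommRing R]
    [AddCommGroup B] [Module R B] [Fintype κ] [DecidableEq κ]
    {p : (ι → R) →ₗ[R] B} {q : (κ → R) →ₗ[R] B} (h : LinearMap.range q ≤ LinearMap.range p) :
    ∃ V : Matrix ι κ R, p ∘ₗ V.mulVecLin = q := by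
  choose v hv using fun j : κ => h ⟨Pi.single j 1, rfl⟩
  refine ⟨Matrix.of fun i j => v j i, ?_⟩
  ext j
  simp only [coe_comp, Function.comp_apply, single_apply, Matrix.mulVecLin_apply,
    Matrix.mulVec_single_one]
  exact hv j

def LinearMap.sumElim {R B ι ι' : Type*} [CommRing R] [AddCommGroup B] [Module R B]
    (p : (ι → R) →ₗ[R] B) (q : (ι' → R) →ₗ[R] B) : (ι ⊕ ι' → R) →ₗ[R] B :=
  p ∘ₗ funLeft R R Sum.inl + q ∘ₗ funLeft R R Sum.inr

@[simp]
theorem LinearMap.sumElim_apply {R B ι ι' : Type*} [CommRing R] [AddCommGroup B] [Module R B]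
    (p : (ι → R) →ₗ[R] B) (q : (ι' → R) →ₗ[R] B) (u : ι ⊕ ι' → R) :
    p.sumElim q u = p (u ∘ Sum.inl) + q (u ∘ Sum.inr) :=
  rfl

namespace Matrix

variable {R : Type*} [CommRing R] {ι κ : Type*}

/-- `minorsIdeal` for arbitrary index types, as block matrices are indexed by sums. -/
def minors (M : Matrix ι κ R) (k : ℕ) : Ideal R :=
  Ideal.span { x | ∃ (r : Fin k → ι) (c : Fin k → κ), x = (M.submatrix r c).det }

theorem elemIdeal_eq_minors {n m : ℕ} (M : Matrix (Fin n) (Fin m) R) (i : ℕ) :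
    elemIdeal M i = M.minors (n - i) :=
  rfl

theorem det_submatrix_mem_minors (M : Matrix ι κ R) {k : ℕ} (r : Fin k → ι) (c : Fin k → κ) :
    (M.submatrix r c).det ∈ M.minors k :=
  Ideal.subset_span ⟨r, c, rfl⟩

theorem minors_zero (M : Matrix ι κ R) : M.minors 0 = ⊤ :=
  (Ideal.eq_top_iff_one _).2 <| by
    simpa using M.det_submatrix_mem_minors finZeroElim finZeroElim

theorem minors_fg [Finite ι] [Finite κ] (M : Matrix ι κ R) (k : ℕ) : (M.minors k).FG :=
  Submodule.fg_def.2 ⟨_, (Set.finite_range fun rc : (Fin k → ι) × (Fin k → κ) =>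
    (M.submatrix rc.1 rc.2).det).subset (by rintro _ ⟨r, c, rfl⟩; exact ⟨(r, c), rfl⟩), rfl⟩

theorem minors_succ_le (M : Matrix ι κ R) (k : ℕ) : M.minors (k + 1) ≤ M.minors k := by
  refine Ideal.span_le.2 ?_
  rintro _ ⟨r, c, rfl⟩
  rw [SetLike.mem_coe, det_succ_row_zero]
  exact Ideal.sum_mem _ fun j _ => Ideal.mul_mem_left _ _ <| by
    rw [submatrix_submatrix]; exact M.det_submatrix_mem_minors _ _

theorem minors_antitone (M : Matrix ι κ R) : Antitone M.minors :=
  antitone_nat_of_succ_le M.minors_succ_le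

theorem minors_submatrix_le {ι' κ' : Type*} (M : Matrix ι κ R) (f : ι' → ι) (g : κ' → κ)
    (k : ℕ) : (M.submatrix f g).minors k ≤ M.minors k :=
  Ideal.span_le.2 <| by
    rintro _ ⟨r, c, rfl⟩
    rw [submatrix_submatrix]
    exact M.det_submatrix_mem_minors _ _

theorem minors_submatrix_equiv {ι' κ' : Type*} (M : Matrix ι κ R) (e : ι' ≃ ι) (e' : κ' ≃ κ)
    (k : ℕ) : (M.submatrix e e').minors k = M.minors k := by
  refine le_antisymm (M.minors_submatrix_le _ _ k) ?_
  have := (M.submatrix e e').minors_submatrix_le e.symm e'.symm k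
  rwa [submatrix_submatrix, e.self_comp_symm, e'.self_comp_symm, submatrix_id_id] at this

theorem minors_transpose (M : Matrix ι κ R) (k : ℕ) : Mᵀ.minors k = M.minors k := by
  unfold minors
  congr 1
  ext x
  constructor <;> rintro ⟨r, c, rfl⟩ <;> refine ⟨c, r, ?_⟩
  · rw [← transpose_submatrix, det_transpose]
  · rw [← det_transpose, transpose_submatrix]

/-- The columns of `N * Q` are linear combinations of those of `N`, and the determinant is
multilinear in the columns. -/
theorem minors_mul_right_le {ν : Type*} [Fintype ν] (N : Matrix ι ν R) (Q : Matrix ν κ R)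
    (k : ℕ) : (N * Q).minors k ≤ N.minors k := by
  refine Ideal.span_le.2 ?_
  rintro _ ⟨r, c, rfl⟩
  have hcols : ((N * Q).submatrix r c)ᵀ = fun j => ∑ l, Q l (c j) • fun i => N (r i) l := by
    ext j i
    simp [mul_apply, Finset.sum_apply, mul_comm]
  rw [SetLike.mem_coe, ← det_transpose, hcols]
  change (detRowAlternating : (Fin k → R) [⋀^Fin k]→ₗ[R] R).toMultilinearMap
    (fun j => ∑ l, Q l (c j) • fun i => N (r i) l) ∈ _
  rw [MultilinearMap.map_sum]
  refine Ideal.sum_mem _ fun φ _ => ?_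
  rw [MultilinearMap.map_smul_univ, smul_eq_mul]
  refine Ideal.mul_mem_left _ _ ?_
  change ((N.submatrix r φ)ᵀ).det ∈ _
  rw [det_transpose]
  exact N.det_submatrix_mem_minors r φ

theorem minors_mul_left_le {ν : Type*} [Fintype ν] (P : Matrix ι ν R) (N : Matrix ν κ R)
    (k : ℕ) : (P * N).minors k ≤ N.minors k := by
  rw [← minors_transpose, transpose_mul, ← N.minors_transpose]
  exact minors_mul_right_le _ _ k

theorem minors_le_of_range_le {κ' : Type*} [Fintype κ] [Fintype κ'] [DecidableEq κ']
    (M : Matrix ι κ R) (M' : Matrix ι κ' R)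
    (h : LinearMap.range M'.mulVecLin ≤ LinearMap.range M.mulVecLin) (k : ℕ) :
    M'.minors k ≤ M.minors k := by
  obtain ⟨Q, hQ⟩ := exists_mulVecLin_comp_eq_of_range_le h
  have : M * Q = M' := by
    apply toLin'.injective
    rw [toLin'_apply', toLin'_apply', mulVecLin_mul, hQ]
  exact this ▸ minors_mul_right_le M Q k

theorem fromBlocks_submatrix_sum_map {ι' κ' α β γ δ : Type*} {S : Type*}
    (A : Matrix ι κ S) (B : Matrix ι κ' S) (C : Matrix ι' κ S) (D : Matrix ι' κ' S)
    (f : α → ι) (g : β → ι') (h : γ → κ) (l : δ → κ') :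
    (fromBlocks A B C D).submatrix (Sum.map f g) (Sum.map h l) =
      fromBlocks (A.submatrix f h) (B.submatrix f l) (C.submatrix g h) (D.submatrix g l) := by
  ext (_ | _) (_ | _) <;> rfl

theorem minors_mul_minors_le {ι' κ' : Type*} (A : Matrix ι κ R) (C : Matrix ι' κ R)
    (D : Matrix ι' κ' R) (a b : ℕ) :
    A.minors a * D.minors b ≤ (fromBlocks A 0 C D).minors (a + b) := by
  rw [minors, minors, Ideal.span_mul_span', Ideal.span_le]
  rintro _ ⟨_, ⟨r, c, rfl⟩, _, ⟨r', c', rfl⟩, rfl⟩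
  have := (fromBlocks A 0 C D).det_submatrix_mem_minors
    (Sum.map r r' ∘ finSumFinEquiv.symm) (Sum.map c c' ∘ finSumFinEquiv.symm)
  rw [← submatrix_submatrix, fromBlocks_submatrix_sum_map, det_submatrix_equiv_self] at this
  simpa [det_fromBlocks_zero₁₂] using this

theorem minors_one_card [Fintype ι] [DecidableEq ι] :
    (1 : Matrix ι ι R).minors (Fintype.card ι) = ⊤ := by
  rw [Ideal.eq_top_iff_one]
  have := (1 : Matrix ι ι R).det_submatrix_mem_minors
    (Fintype.equivFin ι).symm (Fintype.equivFin ι).symm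
  rwa [submatrix_one_equiv, det_one] at this

theorem det_submatrix_fromBlocks_inl_mem {ι' κ' : Type*} (M : Matrix ι κ R)
    (C : Matrix ι' κ R) (D : Matrix ι' κ' R) {k : ℕ} (r : Fin k → ι) (c : Fin k → κ ⊕ κ') :
    ((fromBlocks M 0 C D).submatrix (Sum.inl ∘ r) c).det ∈ M.minors k := by
  by_cases hc : ∃ q b, c q = Sum.inr b
  · obtain ⟨q, b, hq⟩ := hc
    rw [det_eq_zero_of_column_eq_zero q fun p => by simp [hq]]
    exact zero_mem _
  · simp only [not_exists] at hc
    choose c' hc' using fun q => Sum.isLeft_iff.1 <| Sum.not_isRight.1 fun h =>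
      (Sum.isRight_iff.1 h).elim (hc q)
    obtain rfl : c = Sum.inl ∘ c' := funext hc'
    exact M.det_submatrix_mem_minors r c'

open Finset in
/-- Expanding along the `s` rows that come from the identity block leaves a minor of `M`. -/
theorem det_submatrix_fromBlocks_one_mem {ι' : Type*} [DecidableEq ι'] (M : Matrix ι κ R) :
    ∀ (s k : ℕ) (r : Fin k → ι ⊕ ι') (c : Fin k → κ ⊕ ι'), #{p | (r p).isRight} = s →
      ((fromBlocks M 0 0 (1 : Matrix ι' ι' R)).submatrix r c).det ∈ M.minors (k - s)
  | 0, k, r, c, hs => by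
    choose r' hr' using fun p => Sum.isLeft_iff.1 <| Sum.not_isRight.1 <|
      filter_eq_empty_iff.1 (card_eq_zero.1 hs) (mem_univ p)
    obtain rfl : r = Sum.inl ∘ r' := funext hr'
    exact det_submatrix_fromBlocks_inl_mem M 0 1 r' c
  | s + 1, k, r, c, hs => by
    obtain ⟨p₀, hp₀⟩ := card_pos.1 (by rw [hs]; exact s.succ_pos)
    rw [mem_filter] at hp₀
    cases k with
    | zero => exact p₀.elim0
    | succ k =>
      rw [det_succ_row _ p₀, Nat.add_sub_add_right]
      refine Ideal.sum_mem _ fun q _ => Ideal.mul_mem_left _ _ ?_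
      rw [submatrix_submatrix]
      refine det_submatrix_fromBlocks_one_mem M s k _ _ ?_
      rw [card_filter, Fin.sum_univ_succAbove _ p₀, if_pos hp₀.2, ← card_filter] at hs
      simp only [Function.comp_apply]
      omega

open Finset in
theorem minors_fromBlocks_zero_one_le {ι' : Type*} [Fintype ι'] [DecidableEq ι']
    (M : Matrix ι κ R) (k : ℕ) :
    (fromBlocks M 0 0 (1 : Matrix ι' ι' R)).minors (k + Fintype.card ι') ≤ M.minors k := by
  refine Ideal.span_le.2 ?_
  rintro _ ⟨r, c, rfl⟩
  by_cases hr : Function.Injective r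
  · have hcard : #{p | (r p).isRight} ≤ Fintype.card ι' := by
      rw [← Fintype.card_subtype]
      refine Fintype.card_le_of_injective (fun p => (r p.1).getRight p.2) fun p p' h =>
        Subtype.ext <| hr ?_
      rw [← Sum.inr_getRight (r p) p.2, ← Sum.inr_getRight (r p') p'.2]
      exact congrArg Sum.inr h
    exact M.minors_antitone (by omega) (det_submatrix_fromBlocks_one_mem M _ _ r c rfl)
  · obtain ⟨p, p', hrp, hne⟩ := Function.not_injective_iff.1 hr
    rw [SetLike.mem_coe, det_zero_of_row_eq hne (funext fun q => by simp [hrp])]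
    exact zero_mem _

theorem minors_fromBlocks_one {ι' : Type*} [Fintype ι] [DecidableEq ι] [Fintype ι']
    [DecidableEq ι'] (M : Matrix ι κ R) (X : Matrix ι ι' R) (k : ℕ) :
    (fromBlocks M X 0 (1 : Matrix ι' ι' R)).minors (k + Fintype.card ι') = M.minors k := by
  have hrowOp (Y Y' : Matrix ι ι' R) : fromBlocks M Y 0 (1 : Matrix ι' ι' R) =
      fromBlocks 1 (Y - Y') 0 1 * fromBlocks M Y' 0 1 := by
    refine Eq.trans ?_ (fromBlocks_multiply ..).symm
    simp
  refine le_antisymm ?_ ?_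
  · rw [hrowOp X 0]
    exact (minors_mul_left_le _ _ _).trans (minors_fromBlocks_zero_one_le M k)
  · calc M.minors k = M.minors k * (1 : Matrix ι' ι' R).minors (Fintype.card ι') := by
          rw [minors_one_card, Ideal.mul_top]
      _ ≤ (fromBlocks M 0 0 (1 : Matrix ι' ι' R)).minors (k + Fintype.card ι') :=
          minors_mul_minors_le _ _ _ _ _
      _ ≤ _ := by
          rw [hrowOp 0 X]
          exact minors_mul_left_le _ _ _

variable {B : Type*} [AddCommGroup B] [Module R B] {ι' κ' : Type*}

/-- `M` is a presentation matrix of `B` with respect to the generators `p (Pi.single i 1)`. -/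
def Presents [Fintype κ] (M : Matrix ι κ R) (p : (ι → R) →ₗ[R] B) : Prop :=
  Function.Surjective p ∧ LinearMap.ker p = LinearMap.range M.mulVecLin

namespace Presents

variable [Fintype κ] {M : Matrix ι κ R} {p : (ι → R) →ₗ[R] B}

theorem apply_mulVec (h : M.Presents p) (w : κ → R) : p (M *ᵥ w) = 0 :=
  (h.2.symm ▸ ⟨w, rfl⟩ : M *ᵥ w ∈ LinearMap.ker p)

theorem minors_eq [Fintype κ'] [DecidableEq κ] [DecidableEq κ'] {M' : Matrix ι κ' R}
    (h : M.Presents p) (h' : M'.Presents p) (k : ℕ) : M.minors k = M'.minors k :=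
  le_antisymm (minors_le_of_range_le _ _ (h.2 ▸ h'.2 ▸ le_rfl) k)
    (minors_le_of_range_le _ _ (h'.2 ▸ h.2 ▸ le_rfl) k)

theorem reindex (h : M.Presents p) (e : ι' ≃ ι) :
    (M.submatrix e (Equiv.refl κ)).Presents (p ∘ₗ funLeft R R e.symm) := by
  refine ⟨h.1.comp (funLeft_surjective_of_injective _ _ _ e.symm.injective), ?_⟩
  ext u
  rw [LinearMap.mem_ker, LinearMap.comp_apply, ← LinearMap.mem_ker, h.2]
  simp only [LinearMap.mem_range, mulVecLin_apply, submatrix_mulVec_equiv]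
  exact exists_congr fun w => e.eq_comp_symm _ _

/-- The columns of `V` express the adjoined generators `q` through the old ones. -/
theorem exists_fromBlocks_sumElim [Fintype ι'] [DecidableEq ι'] (h : M.Presents p)
    (q : (ι' → R) →ₗ[R] B) :
    ∃ V : Matrix ι ι' R, (fromBlocks M (-V) 0 (1 : Matrix ι' ι' R)).Presents (p.sumElim q) := by
  obtain ⟨V, hV⟩ := exists_mulVecLin_comp_eq_of_range_le (p := p) (q := q)
    (by rw [range_eq_top.2 h.1]; exact le_top)
  have hpV (w : ι' → R) : p (V *ᵥ w) = q w := LinearMap.congr_fun hV w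
  refine ⟨V, fun b => ?_, le_antisymm (fun u hu => ?_) ?_⟩
  · obtain ⟨v, rfl⟩ := h.1 b
    exact ⟨Sum.elim v 0, by simp⟩
  · rw [LinearMap.mem_ker, sumElim_apply, ← hpV, ← map_add, ← LinearMap.mem_ker, h.2] at hu
    obtain ⟨w, hw⟩ := hu
    refine ⟨Sum.elim w (u ∘ Sum.inr), ?_⟩
    rw [mulVecLin_apply] at hw ⊢
    rw [fromBlocks_mulVec, ← Sum.elim_comp_inl_inr u]
    simp [hw, neg_mulVec]
  · rintro _ ⟨w, rfl⟩
    simp [fromBlocks_mulVec, neg_mulVec, hpV, h.apply_mulVec]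

open Fintype in
theorem minors_card_sub_le [Fintype ι] [DecidableEq ι] [DecidableEq κ] [Fintype ι']
    [DecidableEq ι'] [Fintype κ'] [DecidableEq κ'] {M' : Matrix ι' κ' R}
    {p' : (ι' → R) →ₗ[R] B} (h : M.Presents p) (h' : M'.Presents p') (i : ℕ) :
    M.minors (card ι - i) ≤ M'.minors (card ι' - i) := by
  obtain hi | hi := le_or_gt i (card ι')
  swap
  · rw [Nat.sub_eq_zero_of_le hi.le, minors_zero]
    exact le_top
  obtain ⟨V, hV⟩ := h.exists_fromBlocks_sumElim p'
  obtain ⟨W, hW⟩ := h'.exists_fromBlocks_sumElim p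
  -- both enlargements present `B` on the generators of `M` followed by those of `M'`
  have hW' : ((fromBlocks M' (-W) 0 1).submatrix (Equiv.sumComm ι ι') (Equiv.refl _)).Presents
      (p.sumElim p') := by
    convert hW.reindex (Equiv.sumComm ι ι') using 1
    refine LinearMap.ext fun u => ?_
    exact add_comm _ _
  calc M.minors (card ι - i)
      = (fromBlocks M (-V) 0 1).minors (card ι - i + card ι') := (minors_fromBlocks_one ..).symm
    _ ≤ (fromBlocks M (-V) 0 1).minors (card ι + card ι' - i) := minors_antitone _ (by omega)
    _ = _ := hV.minors_eq hW' _
    _ = (fromBlocks M' (-W) 0 1).minors (card ι' - i + card ι) := by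
      rw [minors_submatrix_equiv]
      congr 1
      omega
    _ = M'.minors (card ι' - i) := minors_fromBlocks_one ..

end Presents

variable {A C : Type*} [AddCommGroup A] [Module R A] [AddCommGroup C] [Module R C]

/-- Horseshoe lemma for presentations: lifts of the generators of `C` together with the images
of the generators of `A` generate `B`, and the relations of `C`, lifted to `B`, are corrected
by the columns of `X`. -/
theorem exists_presents_fromBlocks_of_exact {f : A →ₗ[R] B} {g : B →ₗ[R] C}
    (hf : Function.Injective f) (hg : Function.Surjective g)
    (hfg : LinearMap.ker g = LinearMap.range f) {ιA κA ιC κC : Type*} [Fintype κA] [Fintype ιC]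
    [Fintype κC] [DecidableEq κC] {MA : Matrix ιA κA R}
    {pA : (ιA → R) →ₗ[R] A} {MC : Matrix ιC κC R} {pC : (ιC → R) →ₗ[R] C}
    (hA : MA.Presents pA) (hC : MC.Presents pC) :
    ∃ (X : Matrix ιA κC R) (p : (ιC ⊕ ιA → R) →ₗ[R] B), (fromBlocks MC 0 X MA).Presents p := by
  obtain ⟨s, hs⟩ := Module.projective_lifting_property g pC hg
  have hgs (x : ιC → R) : g (s x) = pC x := LinearMap.congr_fun hs x
  have hgf (a : A) : g (f a) = 0 := by
    rw [← LinearMap.mem_ker, hfg]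
    exact mem_range_self f a
  have hrange : LinearMap.range (s ∘ₗ MC.mulVecLin) ≤ LinearMap.range (f ∘ₗ pA) := by
    rw [range_comp_of_range_eq_top _ (range_eq_top.2 hA.1), ← hfg]
    rintro _ ⟨w, rfl⟩
    simp [hgs, hC.apply_mulVec]
  obtain ⟨Y, hY⟩ := exists_mulVecLin_comp_eq_of_range_le hrange
  have hfY (w : κC → R) : f (pA (Y *ᵥ w)) = s (MC *ᵥ w) := LinearMap.congr_fun hY w
  refine ⟨-Y, s.sumElim (f ∘ₗ pA), fun b => ?_, le_antisymm (fun u hu => ?_) ?_⟩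
  · obtain ⟨x, hx⟩ := hC.1 (g b)
    obtain ⟨a, ha⟩ : b - s x ∈ LinearMap.range f := by
      rw [← hfg, LinearMap.mem_ker, map_sub, hgs, hx, sub_self]
    obtain ⟨y, rfl⟩ := hA.1 a
    exact ⟨Sum.elim x y, by simp [ha]⟩
  · rw [LinearMap.mem_ker, sumElim_apply] at hu
    obtain ⟨w, hw⟩ : u ∘ Sum.inl ∈ LinearMap.range MC.mulVecLin := by
      rw [← hC.2, LinearMap.mem_ker, ← hgs]
      simpa [hgf] using congrArg g hu
    obtain ⟨z, hz⟩ : Y *ᵥ w + u ∘ Sum.inr ∈ LinearMap.range MA.mulVecLin := by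
      rw [← hA.2, LinearMap.mem_ker, ← map_eq_zero_iff f hf, map_add, map_add, hfY]
      simpa [← hw] using hu
    refine ⟨Sum.elim w z, ?_⟩
    rw [mulVecLin_apply] at hw hz ⊢
    rw [fromBlocks_mulVec, ← Sum.elim_comp_inl_inr u]
    simp [hw, hz, neg_mulVec]
  · rintro _ ⟨w, rfl⟩
    simp [fromBlocks_mulVec, neg_mulVec, hfY, hA.apply_mulVec]

end Matrix

theorem Finset.gcd_id_dvd_of_mem_span {R : Type*} [CommRing R] [IsDomain R]
    [NormalizedGCDMonoid R] {S : Finset R} {x : R} (hx : x ∈ Ideal.span (S : Set R)) :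
    S.gcd id ∣ x :=
  Ideal.mem_span_singleton.1 <|
    Ideal.span_le.2 (fun _ hs => Ideal.mem_span_singleton.2 (Finset.gcd_dvd hs)) hx

theorem IsGCDOfIdeal.dvd_mul {R : Type*} [CommRing R] [IsDomain R] [NormalizedGCDMonoid R]
    {I J : Ideal R} {a b d : R} (ha : IsGCDOfIdeal a I) (hb : IsGCDOfIdeal b J) (hI : I.FG)
    (hJ : J.FG) (hd : ∀ x ∈ I * J, d ∣ x) : d ∣ a * b := by
  obtain ⟨S, rfl⟩ := hI
  obtain ⟨T, rfl⟩ := hJ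
  have hS : S.gcd id ∣ a := ha.2 _ fun _ => Finset.gcd_id_dvd_of_mem_span
  have hT : T.gcd id ∣ b := hb.2 _ fun _ => Finset.gcd_id_dvd_of_mem_span
  have hST (x : R) (hx : x ∈ S) : d ∣ x * T.gcd id :=
    (Finset.dvd_gcd fun y hy => hd _ (Ideal.mul_mem_mul (Ideal.subset_span hx)
      (Ideal.subset_span hy))).trans (T.gcd_mul_left' id x).dvd
  exact ((Finset.dvd_gcd hST).trans (S.gcd_mul_right' id _).dvd).trans (mul_dvd_mul hS hT)

theorem charPoly_dvd_of_ses_general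
    {R : Type*} [CommRing R] [IsDomain R] [UniqueFactorizationMonoid R]
    {A B C : Type*} [AddCommGroup A] [Module R A]
    [AddCommGroup B] [Module R B]
    [AddCommGroup C] [Module R C]
    (f : A →ₗ[R] B) (g : B →ₗ[R] C)
    (hf : Function.Injective f) (hg : Function.Surjective g)
    (hexact : LinearMap.ker g = LinearMap.range f)
    {na ma nb mb nc mc : ℕ}
    (MA : Matrix (Fin na) (Fin ma) R) (pA : (Fin na → R) →ₗ[R] A)
    (hpA : Function.Surjective pA)
    (hkerA : LinearMap.ker pA = LinearMap.range MA.mulVecLin)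
    (MB : Matrix (Fin nb) (Fin mb) R) (pB : (Fin nb → R) →ₗ[R] B)
    (hpB : Function.Surjective pB)
    (hkerB : LinearMap.ker pB = LinearMap.range MB.mulVecLin)
    (MC : Matrix (Fin nc) (Fin mc) R) (pC : (Fin nc → R) →ₗ[R] C)
    (hpC : Function.Surjective pC)
    (hkerC : LinearMap.ker pC = LinearMap.range MC.mulVecLin)
    (i : ℕ) (dAi dBi dC0 : R)
    (hdAi : IsGCDOfIdeal dAi (elemIdeal MA i))
    (hdBi : IsGCDOfIdeal dBi (elemIdeal MB i))
    (hdC0 : IsGCDOfIdeal dC0 (elemIdeal MC 0)) :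
    dBi ∣ dAi * dC0 := by
  let := UniqueFactorizationMonoid.strongNormalizationMonoid (α := R)
  let := UniqueFactorizationMonoid.toNormalizedGCDMonoid R
  simp only [elemIdeal_eq_minors, Nat.sub_zero] at hdAi hdBi hdC0
  obtain ⟨X, p, hB⟩ :=
    exists_presents_fromBlocks_of_exact hf hg hexact ⟨hpA, hkerA⟩ ⟨hpC, hkerC⟩
  have hle : MA.minors (na - i) * MC.minors nc ≤ MB.minors (nb - i) := by
    rw [mul_comm]
    calc MC.minors nc * MA.minors (na - i)
        ≤ (fromBlocks MC 0 X MA).minors (nc + (na - i)) := minors_mul_minors_le ..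
      _ ≤ (fromBlocks MC 0 X MA).minors (Fintype.card (Fin nc ⊕ Fin na) - i) :=
          minors_antitone _ (by simp only [Fintype.card_sum, Fintype.card_fin]; omega)
      _ ≤ MB.minors (nb - i) := by
          simpa using hB.minors_card_sub_le ⟨hpB, hkerB⟩ i
  exact hdAi.dvd_mul hdC0 (minors_fg ..) (minors_fg ..) fun x hx => hdBi.1 x (hle hx)

/-- Over a Noetherian UFD `R`, if `0 → A → B → C → 0` is a short exact sequence of
finitely generated `R`-modules, then for every `i ≥ 0` the characteristic polynomial
`Δ_i(B)` divides `Δ_i(A) · Δ_0(C)` in `R`. -/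
theorem charPoly_dvd_of_ses
    {R : Type*} [CommRing R] [IsDomain R] [IsNoetherianRing R] [UniqueFactorizationMonoid R]
    {A B C : Type*} [AddCommGroup A] [Module R A] [Module.Finite R A]
    [AddCommGroup B] [Module R B] [Module.Finite R B]
    [AddCommGroup C] [Module R C] [Module.Finite R C]
    (f : A →ₗ[R] B) (g : B →ₗ[R] C)
    (hf : Function.Injective f) (hg : Function.Surjective g)
    (hexact : LinearMap.ker g = LinearMap.range f)
    {na ma nb mb nc mc : ℕ}
    (MA : Matrix (Fin na) (Fin ma) R) (pA : (Fin na → R) →ₗ[R] A)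
    (hpA : Function.Surjective pA)
    (hkerA : LinearMap.ker pA = LinearMap.range MA.mulVecLin)
    (MB : Matrix (Fin nb) (Fin mb) R) (pB : (Fin nb → R) →ₗ[R] B)
    (hpB : Function.Surjective pB)
    (hkerB : LinearMap.ker pB = LinearMap.range MB.mulVecLin)
    (MC : Matrix (Fin nc) (Fin mc) R) (pC : (Fin nc → R) →ₗ[R] C)
    (hpC : Function.Surjective pC)
    (hkerC : LinearMap.ker pC = LinearMap.range MC.mulVecLin)
    (i : ℕ) (dAi dBi dC0 : R)
    (hdAi : IsGCDOfIdeal dAi (elemIdeal MA i))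
    (hdBi : IsGCDOfIdeal dBi (elemIdeal MB i))
    (hdC0 : IsGCDOfIdeal dC0 (elemIdeal MC 0)) :
    dBi ∣ dAi * dC0 :=
  charPoly_dvd_of_ses_general f g hf hg hexact MA pA hpA hkerA MB pB hpB hkerB MC pC hpC hkerC i dAi
    dBi dC0 hdAi hdBi hdC0
end

section
/- For any nonzero complex numbers λ_1, λ_2, λ_3, there exist complex numbers α_1, α_2, α_3 with exp(−2πi α_j) = λ_j for j = 1, 2, 3, such that none of the eight numbers α_1, α_2, α_3, −α_1 − α_2 − 2α_3, α_1 + α_2 + α_3, −α_2 − α_3, α_1 + 2α_2 + 2α_3, −(α_1 + 2α_2 + 2α_3) is a strictly positive integer. (This is the admissibility of every rank one local system for the arrangement of the two lines x = 0, y = 0 and the conic x² − yz = 0 in the projective plane, with the line at infinity z = 0.) -/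
open Complex

lemma real_residues (a0 b0 c0 : ℝ) :
    ∃ na nb nc : ℤ,
      (a0 + na < 1) ∧ (b0 + nb < 1) ∧ (c0 + nc < 1) ∧
      (-(a0 + na) - (b0 + nb) - 2 * (c0 + nc) < 1) ∧
      ((a0 + na) + (b0 + nb) + (c0 + nc) < 1) ∧
      (-(b0 + nb) - (c0 + nc) < 1) ∧
      ((a0 + na) + 2 * (b0 + nb) + 2 * (c0 + nc) < 1) ∧
      (-((a0 + na) + 2 * (b0 + nb) + 2 * (c0 + nc)) < 1) := by
  set c : ℝ := Int.fract c0 with hc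
  have hc0 : 0 ≤ c := Int.fract_nonneg c0
  have hc1 : c < 1 := Int.fract_lt_one c0
  set m : ℤ := ⌈b0 + c - 1/2⌉ with hm
  set u : ℝ := b0 + c - m with hudef
  have hu1 : -(1/2) < u := by
    have := Int.ceil_lt_add_one (b0 + c - 1/2)
    simp only [hudef]; linarith
  have hu2 : u ≤ 1/2 := by
    have := Int.le_ceil (b0 + c - 1/2)
    simp only [hudef]; linarith
  set lower : ℝ := max (-1 - 2*u) (-1 - u - c) with hlow
  set upper : ℝ := min 1 (1 - 2*u) with hup
  have h2 : lower + 1 < upper := by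
    rcases max_cases (-1 - 2*u) (-1 - u - c) with ⟨h, _⟩ | ⟨h, _⟩ <;>
      rcases min_cases (1:ℝ) (1 - 2*u) with ⟨h', _⟩ | ⟨h', _⟩ <;>
      rw [hlow, hup, h, h'] <;> linarith
  set na : ℤ := ⌊lower - a0⌋ + 1 with hna
  have ha1 : lower < a0 + na := by
    have := Int.lt_floor_add_one (lower - a0)
    rw [hna]; push_cast; linarith
  have ha2 : a0 + na < upper := by
    have := Int.floor_le (lower - a0)
    rw [hna]; push_cast; linarith
  have hA1 : -1 - 2*u < a0 + na := lt_of_le_of_lt (le_max_left _ _) ha1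
  have hA2 : -1 - u - c < a0 + na := lt_of_le_of_lt (le_max_right _ _) ha1
  have hB1 : a0 + na < 1 := lt_of_lt_of_le ha2 (min_le_left _ _)
  have hB2 : a0 + na < 1 - 2*u := lt_of_lt_of_le ha2 (min_le_right _ _)
  have hbeq : b0 + ((-m : ℤ) : ℝ) = u - c := by push_cast; rw [hudef]; ring
  have hceq : c0 + ((-⌊c0⌋ : ℤ) : ℝ) = c := by
    rw [hc, Int.fract]; push_cast; ring
  refine ⟨na, -m, -⌊c0⌋, ?_, ?_, ?_, ?_, ?_, ?_, ?_, ?_⟩ <;>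
    linarith [hA1, hA2, hB1, hB2, hu1, hu2, hc0, hc1, hbeq, hceq]

lemma exp_key (l : ℂ) (hl : l ≠ 0) (n : ℤ) :
    Complex.exp (-(2 * Real.pi * Complex.I * (Complex.I * Complex.log l / (2 * Real.pi) + n))) = l := by
  have hπ : (2 * (Real.pi : ℂ)) ≠ 0 := by
    simp [Real.pi_ne_zero, Complex.ofReal_ne_zero]
  have h : -(2 * (Real.pi:ℂ) * Complex.I * (Complex.I * Complex.log l / (2 * Real.pi) + n))
      = Complex.log l + ((-n : ℤ) : ℂ) * (2 * Real.pi * Complex.I) := by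
    push_cast
    field_simp
    ring_nf
    rw [Complex.I_sq]
    ring
  rw [h, Complex.exp_add, Complex.exp_log hl,
    Complex.exp_int_mul_two_pi_mul_I]
  ring

/-- Admissibility of every rank one local system for the arrangement of the two lines
`x = 0`, `y = 0` and the conic `x² − yz = 0` in the projective plane, with line at infinity
`z = 0`: for any nonzero complex numbers `λ₁, λ₂, λ₃` there exist residues `α₁, α₂, α₃`
with `exp(−2πiαⱼ) = λⱼ` such that none of the eight numbers
`α₁, α₂, α₃, −α₁−α₂−2α₃, α₁+α₂+α₃, −α₂−α₃, α₁+2α₂+2α₃, −(α₁+2α₂+2α₃)`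
is a strictly positive integer. -/
theorem admissible_residues_two_lines_and_conic
    (l₁ l₂ l₃ : ℂ) (h₁ : l₁ ≠ 0) (h₂ : l₂ ≠ 0) (h₃ : l₃ ≠ 0) :
    ∃ α₁ α₂ α₃ : ℂ,
      Complex.exp (-(2 * Real.pi * Complex.I * α₁)) = l₁ ∧
      Complex.exp (-(2 * Real.pi * Complex.I * α₂)) = l₂ ∧
      Complex.exp (-(2 * Real.pi * Complex.I * α₃)) = l₃ ∧
      ∀ z ∈ ({α₁, α₂, α₃, -α₁ - α₂ - 2 * α₃, α₁ + α₂ + α₃, -α₂ - α₃,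
              α₁ + 2 * α₂ + 2 * α₃, -(α₁ + 2 * α₂ + 2 * α₃)} : Set ℂ),
        ¬ ∃ n : ℤ, 1 ≤ n ∧ z = (n : ℂ) := by
  set β₁ : ℂ := Complex.I * Complex.log l₁ / (2 * Real.pi) with hβ₁
  set β₂ : ℂ := Complex.I * Complex.log l₂ / (2 * Real.pi) with hβ₂
  set β₃ : ℂ := Complex.I * Complex.log l₃ / (2 * Real.pi) with hβ₃
  obtain ⟨na, nb, nc, g1, g2, g3, g4, g5, g6, g7, g8⟩ :=
    real_residues β₁.re β₂.re β₃.re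
  refine ⟨β₁ + na, β₂ + nb, β₃ + nc, exp_key l₁ h₁ na, exp_key l₂ h₂ nb,
    exp_key l₃ h₃ nc, ?_⟩
  intro z hz
  rintro ⟨n, hn, rfl⟩
  have hn' : (1 : ℝ) ≤ (n : ℝ) := by exact_mod_cast hn
  simp only [Set.mem_insert_iff, Set.mem_singleton_iff] at hz
  rcases hz with h | h | h | h | h | h | h | h <;>
  · have := congrArg Complex.re h
    simp only [Complex.add_re, Complex.sub_re, Complex.neg_re, Complex.mul_re,
      Complex.intCast_re, Complex.intCast_im, Complex.re_ofNat, Complex.im_ofNat,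
      Complex.add_im, Complex.intCast_im] at this
    linarith [g1, g2, g3, g4, g5, g6, g7, g8]
end

section
/- For any nonzero complex numbers λ_1, λ_2, λ_3, there exist complex numbers α_1, α_2, α_3 with exp(−2πi α_j) = λ_j for j = 1, 2, 3, such that none of the six numbers α_1, α_2, α_3, −α_1 − α_2 − 2α_3, α_1 + α_2 + α_3, α_1 + 2α_2 + 2α_3 is a strictly positive integer. (This is the admissibility of every rank one local system for the arrangement of the two lines x = 0, y = 0 and the conic x² − y² + yz = 0 in the projective plane, with the line at infinity z = 0.) -/
/-!
Shifting a residue `α` by an integer does not change `exp (-2πiα)`, so each `αⱼ` can be moved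
so that its real part lies in any prescribed half-open window of length one, and it suffices to
keep the real parts of the six numbers below `1`. Take `Re α₁ ∈ (-1, 0]`, `Re α₃ ∈ [0, 1)` and
then `Re α₂` in the window `(-1, 0]` shifted by `-Re α₁ - 2 Re α₃`, which places
`-α₁ - α₂ - 2α₃` in `[0, 1)`; the remaining bounds are linear consequences.
-/

open Complex Set

lemma exp_neg_two_pi_I_mul_add_int (α : ℂ) (n : ℤ) :
    exp (-(2 * Real.pi * I * (α + n))) = exp (-(2 * Real.pi * I * α)) := by
  calc exp (-(2 * Real.pi * I * (α + n)))
      = exp (-(2 * Real.pi * I * α) + (-n : ℤ) * (2 * Real.pi * I)) := by push_cast; ring_nf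
    _ = exp (-(2 * Real.pi * I * α)) := exp_periodic.int_mul (-n) _

lemma exists_exp_neg_two_pi_I_mul_eq {l : ℂ} (hl : l ≠ 0) :
    ∃ α : ℂ, exp (-(2 * Real.pi * I * α)) = l := by
  refine ⟨-(log l / (2 * Real.pi * I)), ?_⟩
  rw [mul_neg, neg_neg, mul_div_cancel₀ _ two_pi_I_ne_zero, exp_log hl]

lemma exists_exp_neg_two_pi_I_mul_eq_re_mem_Ico {l : ℂ} (hl : l ≠ 0) (t : ℝ) :
    ∃ α : ℂ, exp (-(2 * Real.pi * I * α)) = l ∧ α.re ∈ Ico t (t + 1) := by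
  obtain ⟨α, hα⟩ := exists_exp_neg_two_pi_I_mul_eq hl
  obtain ⟨n, hn, -⟩ := existsUnique_add_zsmul_mem_Ico zero_lt_one α.re t
  exact ⟨α + n, by rw [exp_neg_two_pi_I_mul_add_int, hα], by simpa using hn⟩

lemma exists_exp_neg_two_pi_I_mul_eq_re_mem_Ioc {l : ℂ} (hl : l ≠ 0) (t : ℝ) :
    ∃ α : ℂ, exp (-(2 * Real.pi * I * α)) = l ∧ α.re ∈ Ioc (t - 1) t := by
  obtain ⟨α, hα⟩ := exists_exp_neg_two_pi_I_mul_eq hl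
  obtain ⟨n, hn, -⟩ := existsUnique_add_zsmul_mem_Ioc zero_lt_one α.re (t - 1)
  exact ⟨α + n, by rw [exp_neg_two_pi_I_mul_add_int, hα], by simpa using hn⟩

lemma not_exists_int_one_le_eq_of_re_lt_one {w : ℂ} (hw : w.re < 1) :
    ¬ ∃ n : ℤ, 1 ≤ n ∧ w = n := by
  rintro ⟨n, hn, rfl⟩
  have : (1 : ℝ) ≤ n := by exact_mod_cast hn
  simp only [intCast_re] at hw
  linarith

lemma residues_not_pos_int_of_re_mem {α₁ α₂ α₃ : ℂ} (h₁ : α₁.re ∈ Ioc (-1) 0)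
    (h₃ : α₃.re ∈ Ico 0 1) (h₂ : α₂.re ∈ Ioc (-α₁.re - 2 * α₃.re - 1) (-α₁.re - 2 * α₃.re)) :
    ∀ z ∈ ({α₁, α₂, α₃, -α₁ - α₂ - 2 * α₃, α₁ + α₂ + α₃, α₁ + 2 * α₂ + 2 * α₃} : Set ℂ),
      ¬ ∃ n : ℤ, 1 ≤ n ∧ z = n := by
  obtain ⟨h₁, h₁'⟩ := h₁
  obtain ⟨h₃, h₃'⟩ := h₃
  obtain ⟨h₂, h₂'⟩ := h₂
  refine fun w hw ↦ not_exists_int_one_le_eq_of_re_lt_one ?_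
  revert w
  simp only [mem_insert_iff, mem_singleton_iff, forall_eq_or_imp, forall_eq, add_re, sub_re,
    neg_re, mul_re, re_ofNat, im_ofNat, zero_mul, sub_zero]
  refine ⟨?_, ?_, ?_, ?_, ?_, ?_⟩ <;> linarith

/-- Admissibility of every rank one local system for the arrangement of the two lines
`x = 0`, `y = 0` and the conic `x² − y² + yz = 0` in the projective plane, with line at
infinity `z = 0`: for any nonzero complex numbers `λ₁, λ₂, λ₃` there exist residues
`α₁, α₂, α₃` with `exp(−2πiαⱼ) = λⱼ` such that none of the six numbers
`α₁, α₂, α₃, −α₁−α₂−2α₃, α₁+α₂+α₃, α₁+2α₂+2α₃` is a strictly positive integer. -/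
theorem admissible_residues_two_lines_and_conic'
    (l₁ l₂ l₃ : ℂ) (h₁ : l₁ ≠ 0) (h₂ : l₂ ≠ 0) (h₃ : l₃ ≠ 0) :
    ∃ α₁ α₂ α₃ : ℂ,
      Complex.exp (-(2 * Real.pi * Complex.I * α₁)) = l₁ ∧
      Complex.exp (-(2 * Real.pi * Complex.I * α₂)) = l₂ ∧
      Complex.exp (-(2 * Real.pi * Complex.I * α₃)) = l₃ ∧
      ∀ z ∈ ({α₁, α₂, α₃, -α₁ - α₂ - 2 * α₃, α₁ + α₂ + α₃,
              α₁ + 2 * α₂ + 2 * α₃} : Set ℂ),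
        ¬ ∃ n : ℤ, 1 ≤ n ∧ z = (n : ℂ) := by
  obtain ⟨α₁, e₁, r₁⟩ := exists_exp_neg_two_pi_I_mul_eq_re_mem_Ioc h₁ 0
  obtain ⟨α₃, e₃, r₃⟩ := exists_exp_neg_two_pi_I_mul_eq_re_mem_Ico h₃ 0
  obtain ⟨α₂, e₂, r₂⟩ :=
    exists_exp_neg_two_pi_I_mul_eq_re_mem_Ioc h₂ (-α₁.re - 2 * α₃.re)
  rw [zero_sub] at r₁
  rw [zero_add] at r₃
  exact ⟨α₁, α₂, α₃, e₁, e₂, e₃, residues_not_pos_int_of_re_mem r₁ r₃ r₂⟩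
end
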